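/- arXiv:2405.00673 — 4 statements merged into one kernel-verified Lean document; each statement's English description precedes it below -/
import Mathlib

section
/- Let A and C be positive definite Hermitian matrices on a finite-dimensional complex inner product space. Then the algebraic Riccati equation YAY = C has a unique positive definite solution, given by Y = A^{-1/2}(A^{1/2} C A^{1/2})^{1/2} A^{-1/2}. -/
open Matrix
open scoped ComplexOrder

variable {n : Type*} [Fintype n] [DecidableEq n]

/-- Real power of a Hermitian matrix via the functional calculus
(junk value `0` on non-Hermitian input). For a positive definite matrix this is
the unique positive definite `r`-th power. -/
noncomputable def mpow (A : Matrix n n ℂ) (r : ℝ) : Matrix n n ℂ :=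
  if hA : A.IsHermitian then hA.cfc (fun x : ℝ => x ^ r) else 0

/-- The matrix geometric mean `A⁻¹ # C = A^{-1/2} (A^{1/2} C A^{1/2})^{1/2} A^{-1/2}`. -/
noncomputable def invGeoMean (A C : Matrix n n ℂ) : Matrix n n ℂ :=
  mpow A (-(1/2)) * mpow (mpow A (1/2) * C * mpow A (1/2)) (1/2) * mpow A (-(1/2))

namespace RiccatiAux

lemma posDef_conj {M B : Matrix n n ℂ} (hM : M.PosDef) (hB : IsUnit B) :
    (B * M * Bᴴ).PosDef := by
  exact hM.mul_mul_conjTranspose_same (vecMul_injective_of_isUnit hB)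

section cfc
variable {A : Matrix n n ℂ} (hA : A.IsHermitian)

lemma cfc_mul' (f g : ℝ → ℝ) :
    hA.cfc f * hA.cfc g = hA.cfc (fun x => f x * g x) := by
  have key : ∀ (a b c d e f : Matrix n n ℂ),
      (a * b * c) * (d * e * f) = a * (b * (c * d) * e) * f := fun a b c d e f => by
    simp only [mul_assoc]
  have h1 : star (hA.eigenvectorUnitary : Matrix n n ℂ) *
      (hA.eigenvectorUnitary : Matrix n n ℂ) = 1 :=
    Unitary.star_mul_self_of_mem (SetLike.coe_mem _)
  unfold Matrix.IsHermitian.cfc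
  simp only [Unitary.conjStarAlgAut_apply]
  rw [key, h1, mul_one, diagonal_mul_diagonal]
  congr! with i
  simp

lemma cfc_congr' {f g : ℝ → ℝ} (h : ∀ i, f (hA.eigenvalues i) = g (hA.eigenvalues i)) :
    hA.cfc f = hA.cfc g := by
  unfold Matrix.IsHermitian.cfc
  have : (RCLike.ofReal ∘ f ∘ hA.eigenvalues : n → ℂ) = RCLike.ofReal ∘ g ∘ hA.eigenvalues :=
    funext fun i => by simp [h i]
  rw [this]

lemma cfc_id' : hA.cfc id = A := by
  simpa [Matrix.IsHermitian.cfc, Function.comp_def] using hA.spectral_theorem.symm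

lemma cfc_one' : hA.cfc (fun _ => 1) = 1 := by
  have h1 : (hA.eigenvectorUnitary : Matrix n n ℂ) *
      star (hA.eigenvectorUnitary : Matrix n n ℂ) = 1 :=
    Unitary.mul_star_self_of_mem (SetLike.coe_mem _)
  unfold Matrix.IsHermitian.cfc
  have : (RCLike.ofReal ∘ (fun _ : ℝ => (1:ℝ)) ∘ hA.eigenvalues : n → ℂ) = fun _ => 1 := by
    funext i; simp
  simp only [Unitary.conjStarAlgAut_apply]
  rw [this, diagonal_one, mul_one, h1]

lemma isUnit_eigenvectorUnitary : IsUnit (hA.eigenvectorUnitary : Matrix n n ℂ) :=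
  ⟨⟨_, star (hA.eigenvectorUnitary : Matrix n n ℂ),
    Unitary.mul_star_self_of_mem (SetLike.coe_mem _),
    Unitary.star_mul_self_of_mem (SetLike.coe_mem _)⟩, rfl⟩

lemma cfc_posDef {f : ℝ → ℝ} (h : ∀ i, 0 < f (hA.eigenvalues i)) :
    (hA.cfc f).PosDef := by
  unfold Matrix.IsHermitian.cfc
  simp only [Unitary.conjStarAlgAut_apply]
  rw [star_eq_conjTranspose]
  refine posDef_conj ?_ (isUnit_eigenvectorUnitary hA)
  refine posDef_diagonal_iff.mpr fun i => ?_
  simpa using h i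

end cfc

section mpow
variable {A : Matrix n n ℂ}

lemma mpow_eq (hA : A.PosDef) (r : ℝ) : mpow A r = hA.isHermitian.cfc (fun x : ℝ => x ^ r) :=
  dif_pos hA.isHermitian

lemma mpow_posDef (hA : A.PosDef) (r : ℝ) : (mpow A r).PosDef := by
  rw [mpow_eq hA]
  exact cfc_posDef _ fun i => Real.rpow_pos_of_pos (hA.eigenvalues_pos i) r

lemma mpow_mul_mpow (hA : A.PosDef) (r s : ℝ) : mpow A r * mpow A s = mpow A (r + s) := by
  rw [mpow_eq hA, mpow_eq hA, mpow_eq hA, cfc_mul']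
  exact cfc_congr' _ fun i => (Real.rpow_add (hA.eigenvalues_pos i) r s).symm

lemma mpow_one' (hA : A.PosDef) : mpow A 1 = A := by
  rw [mpow_eq hA, cfc_congr' _ (g := id) fun i => Real.rpow_one _, cfc_id']

lemma mpow_zero' (hA : A.PosDef) : mpow A 0 = 1 := by
  rw [mpow_eq hA, cfc_congr' _ (g := fun _ => 1) fun i => Real.rpow_zero _, cfc_one']

end mpow

end RiccatiAux

open RiccatiAux in
/-- For positive definite Hermitian matrices `A` and `C`, the algebraic Riccati equation
`Y * A * Y = C` has a unique positive definite solution, given by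
`Y = A^{-1/2} (A^{1/2} C A^{1/2})^{1/2} A^{-1/2}`. -/
theorem riccati_unique_posDef_solution (A C : Matrix n n ℂ)
    (hA : A.PosDef) (hC : C.PosDef) :
    (invGeoMean A C).PosDef ∧ invGeoMean A C * A * invGeoMean A C = C ∧
      ∀ Y : Matrix n n ℂ, Y.PosDef → Y * A * Y = C → Y = invGeoMean A C := by
  set S := mpow A (1/2) with hSdef
  set T := mpow A (-(1/2)) with hTdef
  have hS : S.PosDef := mpow_posDef hA _
  have hT : T.PosDef := mpow_posDef hA _
  have hSH : Sᴴ = S := hS.isHermitian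
  have hTH : Tᴴ = T := hT.isHermitian
  have hB : (S * C * S).PosDef := by
    have := posDef_conj hC hS.isUnit
    rwa [hSH] at this
  set B := S * C * S with hBdef
  set M := mpow B (1/2) with hMdef
  have hM : M.PosDef := mpow_posDef hB _
  have hMH : Mᴴ = M := hM.isHermitian
  have hTS : T * S = 1 := by
    rw [hTdef, hSdef, mpow_mul_mpow hA]; norm_num; exact mpow_zero' hA
  have hST : S * T = 1 := by
    rw [hTdef, hSdef, mpow_mul_mpow hA]; norm_num; exact mpow_zero' hA
  have hSS : S * S = A := by
    rw [hSdef, mpow_mul_mpow hA]; norm_num; exact mpow_one' hA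
  have hMM : M * M = B := by
    rw [hMdef, mpow_mul_mpow hB]; norm_num; exact mpow_one' hB
  have hIG : invGeoMean A C = T * M * T := rfl
  have hTS' : ∀ X : Matrix n n ℂ, T * (S * X) = X := fun X => by
    rw [← mul_assoc, hTS, one_mul]
  have hST' : ∀ X : Matrix n n ℂ, S * (T * X) = X := fun X => by
    rw [← mul_assoc, hST, one_mul]
  have hMM' : ∀ X : Matrix n n ℂ, M * (M * X) = B * X := fun X => by
    rw [← mul_assoc, hMM]
  refine ⟨?_, ?_, ?_⟩
  · rw [hIG]
    have := posDef_conj hM hT.isUnit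
    rwa [hTH] at this
  · rw [hIG, ← hSS]
    calc T * M * T * (S * S) * (T * M * T)
        = T * (M * (T * (S * (S * (T * (M * T)))))) := by simp only [mul_assoc]
      _ = T * (M * (M * T)) := by rw [hTS', hST']
      _ = T * (B * T) := by rw [hMM']
      _ = T * (S * (C * (S * T))) := by rw [hBdef]; simp only [mul_assoc]
      _ = C := by rw [hST, mul_one, hTS']
  · intro Y hY hYAY
    have hZ : (S * Y * S).PosDef := by
      have := posDef_conj hY hS.isUnit
      rwa [hSH] at this
    have hZsq : (S * Y * S) ^ 2 = M ^ 2 := by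
      rw [sq, sq, hMM]
      calc S * Y * S * (S * Y * S) = S * (Y * (S * S) * Y) * S := by simp only [mul_assoc]
        _ = S * C * S := by rw [hSS, hYAY]
    have hZM : S * Y * S = M := by
      open scoped MatrixOrder in
      exact (CFC.sq_eq_sq_iff _ _ hZ.posSemidef.nonneg hM.posSemidef.nonneg).mp hZsq
    have : T * (S * Y * S) * T = T * M * T := by rw [hZM]
    rw [hIG, ← this]
    calc Y = T * (S * (Y * (S * T))) := by rw [hST, mul_one, hTS']
      _ = T * (S * Y * S) * T := by simp only [mul_assoc]
end

section
/- Fix an integer p ≥ 2. Let A and C be positive definite Hermitian matrices. Then the equation Y(AY)^{p-1} = C has a unique positive definite solution Y, given by Y = A^{-1/2}(A^{1/2} C A^{1/2})^{1/p} A^{-1/2}. -/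
open Matrix
open scoped ComplexOrder

variable {n : Type*} [Fintype n] [DecidableEq n]

lemma contOn_finite {s : Set ℝ} (hs : s.Finite) (f : ℝ → ℝ) : ContinuousOn f s := by
  rw [continuousOn_iff_continuous_restrict]
  have := hs.to_subtype
  exact continuous_of_discreteTopology

lemma contOn_spec (f : ℝ → ℝ) (A : Matrix n n ℂ) : ContinuousOn f (spectrum ℝ A) :=
  contOn_finite (Matrix.finite_real_spectrum (A := A)) f

lemma spec_pos {A : Matrix n n ℂ} (hA : A.PosDef) : ∀ x ∈ spectrum ℝ A, 0 < x := by
  rw [Matrix.IsHermitian.spectrum_real_eq_range_eigenvalues hA.1]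
  rintro x ⟨i, rfl⟩
  exact hA.eigenvalues_pos i

lemma posDef_conj {A B : Matrix n n ℂ} (hA : A.PosDef) (hB : IsUnit B) :
    (B * A * Bᴴ).PosDef := by
  refine PosDef.of_dotProduct_mulVec_pos (isHermitian_mul_mul_conjTranspose B hA.1) fun x hx => ?_
  have hy : Bᴴ *ᵥ x ≠ 0 := by
    have hinj : Function.Injective (Bᴴ *ᵥ ·) :=
      mulVec_injective_iff_isUnit.2 ((isUnit_conjTranspose _).2 hB)
    intro h
    exact hx (hinj (by simpa using h))
  have key : star x ⬝ᵥ (B * A * Bᴴ) *ᵥ x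
      = star (Bᴴ *ᵥ x) ⬝ᵥ A *ᵥ (Bᴴ *ᵥ x) := by
    rw [star_mulVec, conjTranspose_conjTranspose, ← mulVec_mulVec, ← mulVec_mulVec,
      dotProduct_mulVec (star x) B]
  rw [key]
  exact hA.dotProduct_mulVec_pos hy

lemma mpow_eq {A : Matrix n n ℂ} (hA : A.IsHermitian) (r : ℝ) :
    mpow A r = cfc (fun x : ℝ => x ^ r) A := by
  rw [mpow, dif_pos hA, hA.cfc_eq]

lemma mpow_isHermitian {A : Matrix n n ℂ} (hA : A.IsHermitian) (r : ℝ) :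
    (mpow A r).IsHermitian := by
  rw [mpow_eq hA]; exact cfc_predicate _ A

lemma mpow_posDef {A : Matrix n n ℂ} (hA : A.PosDef) (r : ℝ) : (mpow A r).PosDef := by
  rw [mpow, dif_pos hA.1]
  rw [Matrix.IsHermitian.cfc]
  have hd : ((diagonal (RCLike.ofReal ∘ (fun x : ℝ => x ^ r) ∘ hA.1.eigenvalues)) :
      Matrix n n ℂ).PosDef := by
    refine Matrix.PosDef.diagonal fun i => ?_
    have : (0:ℝ) < hA.1.eigenvalues i ^ r :=
      Real.rpow_pos_of_pos (hA.eigenvalues_pos i) r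
    simpa [Function.comp] using (RCLike.ofReal_pos (K := ℂ)).2 this
  have hU : IsUnit (hA.1.eigenvectorUnitary : Matrix n n ℂ) :=
    (Unitary.toUnits hA.1.eigenvectorUnitary).isUnit
  simpa [star_eq_conjTranspose] using posDef_conj hd hU

lemma mpow_add {A : Matrix n n ℂ} (hA : A.PosDef) (r s : ℝ) :
    mpow A r * mpow A s = mpow A (r + s) := by
  rw [mpow_eq hA.1, mpow_eq hA.1, mpow_eq hA.1,
    ← cfc_mul _ _ A (contOn_spec _ A) (contOn_spec _ A)]
  exact cfc_congr fun x hx => (Real.rpow_add (spec_pos hA x hx) r s).symm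

lemma mpow_zero {A : Matrix n n ℂ} (hA : A.IsHermitian) : mpow A 0 = 1 := by
  rw [mpow_eq hA]
  simp only [Real.rpow_zero]
  exact cfc_const_one ℝ A hA

lemma mpow_one' {A : Matrix n n ℂ} (hA : A.IsHermitian) : mpow A 1 = A := by
  rw [mpow_eq hA]
  simp only [Real.rpow_one]
  exact cfc_id' ℝ A hA

lemma mpow_pow {A : Matrix n n ℂ} (hA : A.PosDef) (r : ℝ) (k : ℕ) :
    (mpow A r) ^ k = mpow A (r * k) := by
  induction k with
  | zero => simp [mpow_zero hA.1]
  | succ k ih =>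
    rw [pow_succ, ih, mpow_add hA]
    push_cast
    ring_nf

lemma mpow_pow_inv {X : Matrix n n ℂ} (hX : X.PosDef) {p : ℕ} (hp : p ≠ 0) :
    mpow (X ^ p) ((p:ℝ)⁻¹) = X := by
  have hXp : (X ^ p).IsHermitian := hX.1.pow p
  have h2 := cfc_comp_pow (R := ℝ) (fun x : ℝ => x ^ ((p:ℝ)⁻¹)) p X
      (contOn_finite ((Matrix.finite_real_spectrum (A := X)).image _) _) hX.1
  rw [mpow_eq hXp, ← h2]
  have : (spectrum ℝ X).EqOn (fun x : ℝ => (x ^ p : ℝ) ^ ((p:ℝ)⁻¹))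
      (fun x : ℝ => x) := by
    intro x hx
    have hx0 : 0 < x := spec_pos hX x hx
    simp only []
    rw [← Real.rpow_natCast x p, ← Real.rpow_mul hx0.le,
      mul_inv_cancel₀ (by exact_mod_cast hp), Real.rpow_one]
  rw [cfc_congr this]
  exact cfc_id' ℝ X hX.1

lemma conj_pow_eq {B Bi R : Matrix n n ℂ} (h1 : B * Bi = 1) (h2 : Bi * B = 1) (k : ℕ) :
    (B * R * Bi) ^ k = B * R ^ k * Bi := by
  induction k with
  | zero => simp [h1]
  | succ k ih =>
    rw [pow_succ, ih, pow_succ]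
    calc B * R ^ k * Bi * (B * R * Bi) = B * R ^ k * (Bi * B) * R * Bi := by
          simp only [mul_assoc]
      _ = B * (R ^ k * R) * Bi := by rw [h2]; simp only [mul_assoc, one_mul]

lemma sandwich_pow {B A Y : Matrix n n ℂ} (hBB : B * B = A) (k : ℕ) :
    (B * Y * B) ^ (k + 1) = B * Y * (A * Y) ^ k * B := by
  induction k with
  | zero => simp
  | succ k ih =>
    rw [pow_succ, ih]
    calc B * Y * (A * Y) ^ k * B * (B * Y * B)
        = B * Y * (A * Y) ^ k * (B * B) * Y * B := by simp only [mul_assoc]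
      _ = B * Y * ((A * Y) ^ k * (A * Y)) * B := by rw [hBB]; simp only [mul_assoc]
      _ = B * Y * (A * Y) ^ (k + 1) * B := by rw [← pow_succ]

/-- For a fixed integer `p ≥ 2` and positive definite Hermitian matrices `A` and `C`,
the equation `Y * (A * Y)^(p-1) = C` has a unique positive definite solution, given by
`Y = A^{-1/2} (A^{1/2} C A^{1/2})^{1/p} A^{-1/2}`. -/
theorem pth_order_yay_unique_posDef_solution (p : ℕ) (hp : 2 ≤ p)
    (A C : Matrix n n ℂ) (hA : A.PosDef) (hC : C.PosDef) :
    (mpow A (-(1/2)) * mpow (mpow A (1/2) * C * mpow A (1/2)) ((p : ℝ)⁻¹)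
        * mpow A (-(1/2))).PosDef ∧
    (mpow A (-(1/2)) * mpow (mpow A (1/2) * C * mpow A (1/2)) ((p : ℝ)⁻¹)
        * mpow A (-(1/2))) *
      (A * (mpow A (-(1/2)) * mpow (mpow A (1/2) * C * mpow A (1/2)) ((p : ℝ)⁻¹)
        * mpow A (-(1/2)))) ^ (p - 1) = C ∧
    ∀ Y : Matrix n n ℂ, Y.PosDef → Y * (A * Y) ^ (p - 1) = C →
      Y = mpow A (-(1/2)) * mpow (mpow A (1/2) * C * mpow A (1/2)) ((p : ℝ)⁻¹)
        * mpow A (-(1/2)) := by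
  have hp0 : p ≠ 0 := by omega
  set B := mpow A (1/2) with hBdef
  set Bi := mpow A (-(1/2)) with hBidef
  have hB : B.PosDef := mpow_posDef hA _
  have hBi : Bi.PosDef := mpow_posDef hA _
  have hBBi : B * Bi = 1 := by
    rw [hBdef, hBidef, mpow_add hA]
    norm_num [mpow_zero hA.1]
  have hBiB : Bi * B = 1 := by
    rw [hBdef, hBidef, mpow_add hA]
    norm_num [mpow_zero hA.1]
  have hBB : B * B = A := by
    rw [hBdef, mpow_add hA]
    norm_num [mpow_one' hA.1]
  set M := B * C * B with hMdef
  have hM : M.PosDef := by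
    have := posDef_conj hC hB.isUnit
    rwa [hB.1.eq] at this
  set R := mpow M ((p : ℝ)⁻¹) with hRdef
  have hR : R.PosDef := mpow_posDef hM _
  have hRp : R ^ p = M := by
    rw [hRdef, mpow_pow hM]
    rw [inv_mul_cancel₀ (by exact_mod_cast hp0 : ((p : ℝ) ≠ 0))]
    exact mpow_one' hM.1
  -- the candidate solution
  have hY₀ : (Bi * R * Bi).PosDef := by
    have := posDef_conj hR hBi.isUnit
    rwa [hBi.1.eq] at this
  refine ⟨hY₀, ?_, ?_⟩
  · -- existence
    have hAY : A * (Bi * R * Bi) = B * R * Bi := by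
      rw [← hBB]
      calc B * B * (Bi * R * Bi) = B * (B * Bi) * (R * Bi) := by simp only [mul_assoc]
        _ = B * R * Bi := by rw [hBBi]; simp only [mul_assoc, mul_one, one_mul]
    rw [hAY, conj_pow_eq hBBi hBiB]
    calc Bi * R * Bi * (B * R ^ (p - 1) * Bi)
        = Bi * R * (Bi * B) * (R ^ (p - 1) * Bi) := by simp only [mul_assoc]
      _ = Bi * (R * R ^ (p - 1)) * Bi := by rw [hBiB]; simp only [mul_assoc, mul_one, one_mul]
      _ = Bi * R ^ p * Bi := by rw [← pow_succ' R (p-1), show p - 1 + 1 = p by omega]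
      _ = Bi * (B * C * B) * Bi := by rw [hRp, ← hMdef]
      _ = (Bi * B) * C * (B * Bi) := by simp only [mul_assoc]
      _ = C := by rw [hBiB, hBBi, one_mul, mul_one]
  · -- uniqueness
    intro Y hY hYeq
    set Z := B * Y * B with hZdef
    have hZ : Z.PosDef := by
      have := posDef_conj hY hB.isUnit
      rwa [hB.1.eq] at this
    have hZp : Z ^ p = M := by
      have h := sandwich_pow hBB (Y := Y) (p - 1)
      rw [show p - 1 + 1 = p by omega] at h
      rw [hZdef, h, hMdef]
      calc B * Y * (A * Y) ^ (p - 1) * B = B * (Y * (A * Y) ^ (p - 1)) * B := by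
            simp only [mul_assoc]
        _ = B * C * B := by rw [hYeq]
    have hZR : Z = R := by
      have e1 : mpow (Z ^ p) ((p : ℝ)⁻¹) = Z := mpow_pow_inv hZ hp0
      have e2 : mpow (R ^ p) ((p : ℝ)⁻¹) = R := mpow_pow_inv hR hp0
      rw [← e1, ← e2, hZp, hRp]
    have : Bi * Z * Bi = Y := by
      rw [hZdef]
      calc Bi * (B * Y * B) * Bi = (Bi * B) * Y * (B * Bi) := by simp only [mul_assoc]
        _ = Y := by rw [hBiB, hBBi, one_mul, mul_one]
    rw [← this, hZR]
end

section
/- Let A and C be positive definite Hermitian matrices. The function L(Y) = Tr(YA) + Tr(Y^{-1}C) is strictly convex on the set of positive definite Hermitian matrices. -/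
open Matrix
open scoped ComplexOrder

variable {n : Type*} [Fintype n] [DecidableEq n]

private lemma cancel2 (Y₁ Y₂ X Z : Matrix n n ℂ) (h1 : IsUnit Y₁.det) (h2 : IsUnit Y₂.det)
    (h : Y₁ * X * Y₂ = Y₁ * Z * Y₂) : X = Z := by
  have := congrArg (fun M => Y₁⁻¹ * M * Y₂⁻¹) h
  simpa [Matrix.mul_assoc, Matrix.nonsing_inv_mul_cancel_left _ _ h1,
    Matrix.mul_nonsing_inv_cancel_right _ _ h2,
    Matrix.mul_nonsing_inv _ h2] using this

private lemma symmS (Y₁ Y₂ : Matrix n n ℂ) (s : ℂ) (h1 : IsUnit Y₁.det) (h2 : IsUnit Y₂.det) :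
    Y₂ * (s • Y₁ + (1-s) • Y₂)⁻¹ * Y₁ = Y₁ * (s • Y₁ + (1-s) • Y₂)⁻¹ * Y₂ := by
  set S := s • Y₁ + (1-s) • Y₂ with hSdef
  have e1 : Y₁⁻¹ * S * Y₂⁻¹ = Y₂⁻¹ * S * Y₁⁻¹ := by
    rw [hSdef]
    simp only [Matrix.mul_add, Matrix.add_mul, Matrix.mul_smul, Matrix.smul_mul,
      Matrix.mul_assoc]
    simp only [Matrix.nonsing_inv_mul_cancel_left _ _ h1,
      Matrix.nonsing_inv_mul_cancel_left _ _ h2, Matrix.mul_nonsing_inv _ h1,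
      Matrix.mul_nonsing_inv _ h2, Matrix.mul_one]
  have e2 : (Y₁⁻¹ * S * Y₂⁻¹)⁻¹ = Y₂ * S⁻¹ * Y₁ := by
    rw [Matrix.mul_inv_rev, Matrix.mul_inv_rev,
      Matrix.nonsing_inv_nonsing_inv _ h1, Matrix.nonsing_inv_nonsing_inv _ h2,
      Matrix.mul_assoc]
  have e3 : (Y₂⁻¹ * S * Y₁⁻¹)⁻¹ = Y₁ * S⁻¹ * Y₂ := by
    rw [Matrix.mul_inv_rev, Matrix.mul_inv_rev,
      Matrix.nonsing_inv_nonsing_inv _ h1, Matrix.nonsing_inv_nonsing_inv _ h2,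
      Matrix.mul_assoc]
  rw [← e2, ← e3, e1]

private lemma keyIdentity (Y₁ Y₂ : Matrix n n ℂ) (s : ℂ) (h1 : IsUnit Y₁.det)
    (h2 : IsUnit Y₂.det) (hS : IsUnit (s • Y₁ + (1-s) • Y₂).det) :
    s • Y₁⁻¹ + (1-s) • Y₂⁻¹ - (s • Y₁ + (1-s) • Y₂)⁻¹
      = (s * (1-s)) • ((Y₁⁻¹ - Y₂⁻¹) * (Y₂ * (s • Y₁ + (1-s) • Y₂)⁻¹ * Y₁) * (Y₁⁻¹ - Y₂⁻¹)) := by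
  set S := s • Y₁ + (1-s) • Y₂ with hSdef
  have hsym := symmS Y₁ Y₂ s h1 h2
  apply cancel2 Y₁ Y₂ _ _ h1 h2
  have lhs : Y₁ * (s • Y₁⁻¹ + (1-s) • Y₂⁻¹ - S⁻¹) * Y₂
      = s • Y₂ + (1-s) • Y₁ - Y₁ * S⁻¹ * Y₂ := by
    simp only [Matrix.mul_add, Matrix.add_mul, Matrix.mul_sub, Matrix.sub_mul,
      Matrix.mul_smul, Matrix.smul_mul, Matrix.mul_assoc,
      Matrix.mul_nonsing_inv_cancel_left _ _ h1, Matrix.nonsing_inv_mul _ h2,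
      Matrix.mul_nonsing_inv _ h1, Matrix.mul_one, Matrix.one_mul]
  have core : Y₁ * ((Y₁⁻¹ - Y₂⁻¹) * (Y₂ * S⁻¹ * Y₁) * (Y₁⁻¹ - Y₂⁻¹)) * Y₂
      = (Y₂ - Y₁) * S⁻¹ * (Y₂ - Y₁) := by
    simp only [Matrix.mul_sub, Matrix.sub_mul, Matrix.mul_assoc,
      Matrix.mul_nonsing_inv_cancel_left _ _ h1, Matrix.mul_nonsing_inv_cancel_left _ _ h2,
      Matrix.nonsing_inv_mul_cancel_left _ _ h1, Matrix.nonsing_inv_mul_cancel_left _ _ h2,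
      Matrix.nonsing_inv_mul _ h1, Matrix.nonsing_inv_mul _ h2,
      Matrix.mul_nonsing_inv _ h1, Matrix.mul_nonsing_inv _ h2,
      Matrix.mul_one, Matrix.one_mul]
  have e4 : s • (Y₂ - Y₁) = Y₂ - S := by rw [hSdef]; module
  have e5 : (1-s) • (Y₂ - Y₁) = S - Y₁ := by rw [hSdef]; module
  have h6 : (s * (1-s)) • ((Y₂ - Y₁) * S⁻¹ * (Y₂ - Y₁)) = (Y₂ - S) * S⁻¹ * (S - Y₁) := by
    rw [← e4, ← e5]
    simp only [Matrix.smul_mul, Matrix.mul_smul, smul_smul]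
    congr 1
    ring
  have rhs : Y₁ * ((s * (1-s)) • ((Y₁⁻¹ - Y₂⁻¹) * (Y₂ * S⁻¹ * Y₁) * (Y₁⁻¹ - Y₂⁻¹))) * Y₂
      = Y₂ - Y₁ * S⁻¹ * Y₂ - S + Y₁ := by
    rw [Matrix.mul_smul, Matrix.smul_mul, core, h6]
    simp only [Matrix.mul_sub, Matrix.sub_mul, Matrix.mul_assoc,
      Matrix.mul_nonsing_inv_cancel_left _ _ hS, Matrix.nonsing_inv_mul_cancel_left _ _ hS,
      Matrix.mul_nonsing_inv _ hS, Matrix.nonsing_inv_mul _ hS, Matrix.mul_one, Matrix.one_mul]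
    rw [← Matrix.mul_assoc Y₁ S⁻¹ Y₂, ← hsym]
    simp only [Matrix.mul_assoc]
    abel
  rw [lhs, rhs, hSdef]
  module

private lemma posDef_csmul {M : Matrix n n ℂ} (hM : M.PosDef) {c : ℝ} (hc : 0 < c) :
    ((c:ℂ) • M).PosDef := by
  refine Matrix.PosDef.of_dotProduct_mulVec_pos ?_ (fun x hx => ?_)
  · rw [IsHermitian, conjTranspose_smul, hM.isHermitian.eq]
    norm_num
  · have h := hM.dotProduct_mulVec_pos hx
    have hc' : (0:ℂ) < (c:ℂ) := by exact_mod_cast hc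
    calc (0:ℂ) < (c:ℂ) * (star x ⬝ᵥ M *ᵥ x) := mul_pos hc' h
    _ = star x ⬝ᵥ ((c:ℂ) • M) *ᵥ x := by
        rw [smul_mulVec, dotProduct_smul, smul_eq_mul]

private lemma trace_re_pos {G : Matrix n n ℂ} (hG : G ≠ 0) : 0 < (trace (Gᴴ * G)).re := by
  have key : (trace (Gᴴ * G)).re = ∑ i, ∑ j, Complex.normSq (G j i) := by
    rw [Matrix.trace, Complex.re_sum]
    congr 1; ext i
    rw [Matrix.diag, Matrix.mul_apply, Complex.re_sum]
    congr 1; ext j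
    rw [Matrix.conjTranspose_apply]
    simp [← Complex.normSq_eq_conj_mul_self]
  rw [key]
  obtain ⟨a, b, hab⟩ : ∃ a b, G a b ≠ 0 := by
    by_contra h; push_neg at h; exact hG (by ext i j; simp [h])
  refine Finset.sum_pos' (fun i _ => Finset.sum_nonneg fun j _ => Complex.normSq_nonneg _)
    ⟨b, Finset.mem_univ _, ?_⟩
  exact Finset.sum_pos' (fun j _ => Complex.normSq_nonneg _)
    ⟨a, Finset.mem_univ _, by simpa using Complex.normSq_pos.mpr hab⟩

private lemma real_smul_eq (t : ℝ) (M : Matrix n n ℂ) : t • M = (t:ℂ) • M := by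
  ext i j; simp [Matrix.smul_apply, Complex.real_smul]


/-- For positive definite Hermitian `A`, `C`, the function
`L(Y) = Tr(Y A) + Tr(Y⁻¹ C)` is strictly convex on the cone of positive definite
Hermitian matrices. -/
theorem L_strictConvexOn (A C : Matrix n n ℂ) (hA : A.PosDef) (hC : C.PosDef) :
    ∀ Y₁ Y₂ : Matrix n n ℂ, Y₁.PosDef → Y₂.PosDef → Y₁ ≠ Y₂ →
      ∀ t : ℝ, t ∈ Set.Ioo (0 : ℝ) 1 →
        (((t • Y₁ + (1 - t) • Y₂) * A).trace
            + ((t • Y₁ + (1 - t) • Y₂)⁻¹ * C).trace).re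
          < t * ((Y₁ * A).trace + (Y₁⁻¹ * C).trace).re
            + (1 - t) * ((Y₂ * A).trace + (Y₂⁻¹ * C).trace).re := by
  intro Y₁ Y₂ hY₁ hY₂ hne t ht
  obtain ⟨ht0, ht1⟩ := ht
  have ht1' : 0 < 1 - t := by linarith
  set s : ℂ := (t:ℂ) with hs
  have hcomb : t • Y₁ + (1 - t) • Y₂ = s • Y₁ + (1-s) • Y₂ := by
    rw [real_smul_eq, real_smul_eq]
    norm_num [hs]
  rw [hcomb]
  set S := s • Y₁ + (1-s) • Y₂ with hSdef
  have hSpd : S.PosDef := by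
    rw [hSdef]
    refine Matrix.PosDef.add (posDef_csmul hY₁ ht0) ?_
    have := posDef_csmul hY₂ ht1'
    convert this using 2
    push_cast
    ring
  have hd1 : IsUnit Y₁.det := hY₁.isUnit.map (Matrix.detMonoidHom)
  have hd2 : IsUnit Y₂.det := hY₂.isUnit.map (Matrix.detMonoidHom)
  have hdS : IsUnit S.det := hSpd.isUnit.map (Matrix.detMonoidHom)
  set F := Y₁⁻¹ - Y₂⁻¹ with hFdef
  set T := Y₂ * S⁻¹ * Y₁ with hTdef
  have hTpd : T.PosDef := by
    have e1 : Y₁⁻¹ * S * Y₂⁻¹ = s • Y₂⁻¹ + (1-s) • Y₁⁻¹ := by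
      rw [hSdef]
      simp only [Matrix.mul_add, Matrix.add_mul, Matrix.mul_smul, Matrix.smul_mul,
        Matrix.mul_assoc]
      simp only [Matrix.nonsing_inv_mul_cancel_left _ _ hd1, Matrix.mul_nonsing_inv _ hd2,
        Matrix.mul_one]
    have e2 : (Y₁⁻¹ * S * Y₂⁻¹)⁻¹ = T := by
      rw [hTdef, Matrix.mul_inv_rev, Matrix.mul_inv_rev,
        Matrix.nonsing_inv_nonsing_inv _ hd1, Matrix.nonsing_inv_nonsing_inv _ hd2,
        Matrix.mul_assoc]
    rw [← e2]
    refine Matrix.PosDef.inv ?_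
    rw [e1]
    refine Matrix.PosDef.add (posDef_csmul hY₂.inv ht0) ?_
    have := posDef_csmul hY₁.inv ht1'
    convert this using 2
    · rfl
    push_cast
    ring
  have hF : F ≠ 0 := by
    rw [hFdef, sub_ne_zero]
    intro h
    apply hne
    have := congrArg (fun M : Matrix n n ℂ => M⁻¹) h
    rwa [Matrix.nonsing_inv_nonsing_inv _ hd1, Matrix.nonsing_inv_nonsing_inv _ hd2] at this
  have hFH : F.IsHermitian := hY₁.inv.isHermitian.sub hY₂.inv.isHermitian
  open MatrixOrder in
  set Th := CFC.sqrt T with hThdef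
  open MatrixOrder in
  set Ch := CFC.sqrt C with hChdef
  open MatrixOrder in
  have hThH : Th.IsHermitian := (Matrix.nonneg_iff_posSemidef.mp (CFC.sqrt_nonneg T)).1
  open MatrixOrder in
  have hChH : Ch.IsHermitian := (Matrix.nonneg_iff_posSemidef.mp (CFC.sqrt_nonneg C)).1
  open MatrixOrder in
  have hThsq : Th * Th = T := CFC.sqrt_mul_sqrt_self T (Matrix.nonneg_iff_posSemidef.mpr hTpd.posSemidef)
  open MatrixOrder in
  have hChsq : Ch * Ch = C := CFC.sqrt_mul_sqrt_self C (Matrix.nonneg_iff_posSemidef.mpr hC.posSemidef)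
  have hdTh : IsUnit Th.det := by
    refine isUnit_of_mul_isUnit_left (y := Th.det) ?_
    rw [← Matrix.det_mul, hThsq]
    exact hTpd.isUnit.map Matrix.detMonoidHom
  have hdCh : IsUnit Ch.det := by
    refine isUnit_of_mul_isUnit_left (y := Ch.det) ?_
    rw [← Matrix.det_mul, hChsq]
    exact hC.isUnit.map Matrix.detMonoidHom
  set G := Th * F * Ch with hGdef
  have hG : G ≠ 0 := by
    intro h
    apply hF
    have h2 := congrArg (fun M => Th⁻¹ * M * Ch⁻¹) h
    simpa [hGdef, Matrix.mul_assoc, Matrix.nonsing_inv_mul_cancel_left _ _ hdTh,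
      Matrix.mul_nonsing_inv_cancel_right _ _ hdCh, Matrix.mul_nonsing_inv _ hdCh] using h2
  have htr : trace (F * T * F * C) = trace (Gᴴ * G) := by
    have hGH : Gᴴ = Ch * F * Th := by
      rw [hGdef, Matrix.conjTranspose_mul, Matrix.conjTranspose_mul, hThH.eq, hChH.eq, hFH.eq,
        Matrix.mul_assoc]
    rw [hGH, hGdef]
    rw [show Ch * F * Th * (Th * F * Ch) = Ch * (F * (Th * Th) * F * Ch) by
      simp only [Matrix.mul_assoc]]
    rw [hThsq, Matrix.trace_mul_comm Ch, ← hChsq]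
    simp only [Matrix.mul_assoc]
  have keyId := keyIdentity Y₁ Y₂ s hd1 hd2 hdS
  have hSinv : S⁻¹ = s • Y₁⁻¹ + (1-s) • Y₂⁻¹ - (s * (1-s)) • (F * T * F) := by
    rw [← hFdef, ← hTdef, ← hSdef] at keyId
    rw [← keyId]
    abel
  have trace1 : trace (S * A) = s * trace (Y₁ * A) + (1-s) * trace (Y₂ * A) := by
    rw [hSdef, Matrix.add_mul, Matrix.smul_mul, Matrix.smul_mul, trace_add, trace_smul,
      trace_smul, smul_eq_mul, smul_eq_mul]
  have trace2 : trace (S⁻¹ * C) = s * trace (Y₁⁻¹ * C) + (1-s) * trace (Y₂⁻¹ * C)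
      - (s * (1-s)) * trace (Gᴴ * G) := by
    rw [hSinv, Matrix.sub_mul, Matrix.add_mul, Matrix.smul_mul, Matrix.smul_mul,
      Matrix.smul_mul, trace_sub, trace_add, trace_smul, trace_smul, trace_smul,
      smul_eq_mul, smul_eq_mul, smul_eq_mul, ← htr]
  rw [trace1, trace2]
  have hgpos := trace_re_pos hG
  set g := trace (Gᴴ * G) with hg
  set a₁ := trace (Y₁ * A)
  set a₂ := trace (Y₂ * A)
  set b₁ := trace (Y₁⁻¹ * C)
  set b₂ := trace (Y₂⁻¹ * C)
  have expand : (s * a₁ + (1-s) * a₂ + (s * b₁ + (1-s) * b₂ - s * (1-s) * g)).re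
      = t * a₁.re + (1-t) * a₂.re + t * b₁.re + (1-t) * b₂.re - (t * (1-t)) * g.re := by
    rw [hs]
    simp only [Complex.add_re, Complex.sub_re, Complex.mul_re, Complex.mul_im,
      Complex.sub_im, Complex.add_im, Complex.one_re, Complex.one_im,
      Complex.ofReal_re, Complex.ofReal_im]
    ring
  rw [expand]
  simp only [Complex.add_re]
  nlinarith [mul_pos (mul_pos ht0 ht1') hgpos]
end

section
/- Let Y be a positive definite Hermitian matrix, Z a nonzero Hermitian matrix, and C a positive definite Hermitian matrix. Then Tr(Y^{-1} Z Y^{-1} Z Y^{-1} C) > 0. -/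
open Matrix
open scoped ComplexOrder

variable {n : Type*} [Fintype n] [DecidableEq n]

lemma trace_conjTranspose_mul_self_re_pos {N : Matrix n n ℂ} (hN : N ≠ 0) :
    0 < ((Nᴴ * N).trace).re := by
  have htr : ((Nᴴ * N).trace).re = ∑ j, ∑ i, Complex.normSq (N i j) := by
    simp only [Matrix.trace, Matrix.diag, Matrix.mul_apply, Matrix.conjTranspose_apply,
      Complex.re_sum]
    refine Finset.sum_congr rfl fun j _ => Finset.sum_congr rfl fun i _ => ?_
    rw [show star (N i j) * N i j = (Complex.normSq (N i j) : ℂ) by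
      rw [Complex.normSq_eq_conj_mul_self]; rfl]
    exact Complex.ofReal_re _
  rw [htr]
  obtain ⟨i, j, hij⟩ : ∃ i j, N i j ≠ 0 := by
    by_contra h; push_neg at h; exact hN (by ext i j; simp [h])
  have h1 : 0 < Complex.normSq (N i j) := Complex.normSq_pos.mpr hij
  calc 0 < Complex.normSq (N i j) := h1
    _ ≤ ∑ i, Complex.normSq (N i j) :=
        Finset.single_le_sum (f := fun i => Complex.normSq (N i j))
          (fun _ _ => Complex.normSq_nonneg _) (Finset.mem_univ i)
    _ ≤ ∑ j, ∑ i, Complex.normSq (N i j) :=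
        Finset.single_le_sum (f := fun j => ∑ i, Complex.normSq (N i j))
          (fun j _ => Finset.sum_nonneg fun _ _ => Complex.normSq_nonneg _) (Finset.mem_univ j)

/-- If `Y` and `C` are positive definite Hermitian and `Z` is a nonzero Hermitian matrix,
then `Tr(Y⁻¹ Z Y⁻¹ Z Y⁻¹ C) > 0`. -/
theorem trace_second_order_term_pos (Y Z C : Matrix n n ℂ)
    (hY : Y.PosDef) (hZ : Z.IsHermitian) (hZ0 : Z ≠ 0) (hC : C.PosDef) :
    0 < ((Y⁻¹ * Z * Y⁻¹ * Z * Y⁻¹ * C).trace).re := by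
  have hYi : (Y⁻¹).PosDef := hY.inv
  open scoped MatrixOrder in set S := CFC.sqrt Y⁻¹ with hS
  open scoped MatrixOrder in set B := CFC.sqrt C with hB
  open scoped MatrixOrder in have hSS : S * S = Y⁻¹ := CFC.sqrt_mul_sqrt_self _ hYi.posSemidef.nonneg
  open scoped MatrixOrder in have hBB : B * B = C := CFC.sqrt_mul_sqrt_self _ hC.posSemidef.nonneg
  open scoped MatrixOrder in have hSH : Sᴴ = S := (CFC.sqrt_nonneg _).posSemidef.isHermitian
  open scoped MatrixOrder in have hBH : Bᴴ = B := (CFC.sqrt_nonneg _).posSemidef.isHermitian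
  set M := Y⁻¹ * Z * S with hM
  have hMH : Mᴴ = S * Z * Y⁻¹ := by
    rw [hM, conjTranspose_mul, conjTranspose_mul, hSH, hZ.eq, (hYi.isHermitian).eq, mul_assoc]
  have key : Y⁻¹ * Z * Y⁻¹ * Z * Y⁻¹ * C = M * Mᴴ * C := by
    rw [hMH, hM, show Y⁻¹ * Z * S * (S * Z * Y⁻¹) = Y⁻¹ * Z * (S * S) * Z * Y⁻¹ by
      simp only [mul_assoc], hSS]
  rw [key]
  set N := B * M with hN
  have htr : (M * Mᴴ * C).trace = (Nᴴ * N).trace := by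
    have e : Nᴴ * N = Mᴴ * C * M := by
      conv_lhs => rw [hN, conjTranspose_mul]
      rw [hBH, show Mᴴ * B * (B * M) = Mᴴ * ((B * B) * M) by simp only [mul_assoc], hBB,
        ← mul_assoc]
    rw [e]
    exact (trace_mul_cycle Mᴴ C M).symm
  rw [htr]
  apply trace_conjTranspose_mul_self_re_pos
  have hSunit : IsUnit S.det := by
    have h2 : S.det * S.det = (Y⁻¹).det := by rw [← det_mul, hSS]
    have hne : (Y⁻¹).det ≠ 0 := ne_of_gt hYi.det_pos
    exact isUnit_iff_ne_zero.mpr (fun h => hne (by rw [← h2, h, mul_zero]))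
  have hBunit : IsUnit B.det := by
    have h2 : B.det * B.det = C.det := by rw [← det_mul, hBB]
    have hne : C.det ≠ 0 := ne_of_gt hC.det_pos
    exact isUnit_iff_ne_zero.mpr (fun h => hne (by rw [← h2, h, mul_zero]))
  have hYunit : IsUnit Y.det := isUnit_iff_ne_zero.mpr (ne_of_gt hY.det_pos)
  intro h0
  apply hZ0
  have hM0 : M = 0 := by
    have := congrArg (fun X => B⁻¹ * X) h0
    simpa [hN, ← mul_assoc, Matrix.nonsing_inv_mul B hBunit] using this
  have hZeq : Z = Y * M * S⁻¹ := by
    rw [hM, show Y * (Y⁻¹ * Z * S) * S⁻¹ = (Y * Y⁻¹) * Z * (S * S⁻¹) by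
      simp only [mul_assoc], Matrix.mul_nonsing_inv S hSunit,
      Matrix.mul_nonsing_inv Y hYunit, one_mul, mul_one]
  rw [hZeq, hM0, mul_zero, zero_mul]
end
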